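/- arXiv:1205.4143 — 2 statements merged into one kernel-verified Lean document; each statement's English description precedes it below -/
import Mathlib

section
/- Let (X, d) be a metric space with a Borel measure μ, let τ > 0, r := √τ, n ∈ ℕ, κ > 0, c > 0, and p ∈ X. Let u : X → [0,∞) be μ-integrable and define ν(A) := ∫_A u dμ for Borel sets A ⊆ X. Assume: (i) ν(A)·ν(B) ≤ exp(−dist(A,B)²/(8τ)) for all Borel sets A, B ⊆ X, where dist(A,B) = inf{d(x,y) : x ∈ A, y ∈ B}; (ii) μ(B(x,r)) ≥ κ τ^{n/2} for every x ∈ X, where B(x,r) is the open metric ball; (iii) ν(B(p,r)) ≥ c. Then for every q ∈ X with μ(B(q,r)) > 0, the average satisfies (1/μ(B(q,r))) ∫_{B(q,r)} u dμ ≤ (e^{1/2}/(cκ)) τ^{−n/2} exp(−d(p,q)²/(16τ)). -/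
open MeasureTheory Set

/-- Distance between two subsets of a metric space:
`setDist A B = inf { dist x y : x ∈ A, y ∈ B }`. -/
noncomputable def setDist {X : Type*} [MetricSpace X] (A B : Set X) : ℝ :=
  sInf ((fun p : X × X => dist p.1 p.2) '' (A ×ˢ B))

/-- Averaged Gaussian upper bound: if the measures `ν(A) = ∫_A u dμ` satisfy the
Hein–Naber concentration inequality, the measure `μ` is non-collapsed at scale `r = √τ`,
and `ν(B(p,r)) ≥ c`, then the average of `u` over any ball `B(q,r)` is bounded by
`(e^{1/2}/(cκ)) τ^{−n/2} exp(−d(p,q)²/(16τ))`. -/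
theorem stmt5 {X : Type*} [MetricSpace X] [MeasurableSpace X] [BorelSpace X]
    (μ : Measure X) (τ : ℝ) (hτ : 0 < τ) (n : ℕ) (κ c : ℝ)
    (hκ : 0 < κ) (hc : 0 < c) (p : X) (u : X → ℝ) (hu : ∀ x, 0 ≤ u x)
    (hint : Integrable u μ)
    (hconc : ∀ A B : Set X, MeasurableSet A → MeasurableSet B →
      (∫ x in A, u x ∂μ) * (∫ x in B, u x ∂μ) ≤ Real.exp (-(setDist A B) ^ 2 / (8 * τ)))
    (hncl : ∀ x : X, κ * τ ^ ((n : ℝ) / 2) ≤ (μ (Metric.ball x (Real.sqrt τ))).toReal)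
    (hlb : c ≤ ∫ x in Metric.ball p (Real.sqrt τ), u x ∂μ) :
    ∀ q : X, 0 < (μ (Metric.ball q (Real.sqrt τ))).toReal →
      (1 / (μ (Metric.ball q (Real.sqrt τ))).toReal) *
          ∫ x in Metric.ball q (Real.sqrt τ), u x ∂μ ≤
        (Real.exp (1 / 2) / (c * κ)) * τ ^ (-(n : ℝ) / 2) *
          Real.exp (-(dist p q) ^ 2 / (16 * τ)) := by
  intro q hM
  set r : ℝ := Real.sqrt τ with hr_def
  have hr : 0 < r := Real.sqrt_pos.mpr hτ
  have hr2 : r ^ 2 = τ := Real.sq_sqrt hτ.le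
  set d : ℝ := dist p q with hd_def
  set A : Set X := Metric.ball p r
  set B : Set X := Metric.ball q r
  set sd : ℝ := setDist A B with hsd_def
  set I : ℝ := ∫ x in B, u x ∂μ with hI_def
  have hI0 : 0 ≤ I := setIntegral_nonneg measurableSet_ball fun x _ => hu x
  -- nonemptiness of the image set
  have hmem : d ∈ ((fun p : X × X => dist p.1 p.2) '' (A ×ˢ B)) :=
    ⟨(p, q), ⟨Metric.mem_ball_self hr, Metric.mem_ball_self hr⟩, rfl⟩
  have hne : ((fun p : X × X => dist p.1 p.2) '' (A ×ˢ B)).Nonempty := ⟨d, hmem⟩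
  have hsd0 : 0 ≤ sd :=
    le_csInf hne (by rintro z ⟨⟨x, y⟩, ⟨hx, hy⟩, rfl⟩; exact dist_nonneg)
  have hsdlb : d - 2 * r ≤ sd := by
    refine le_csInf hne ?_
    rintro z ⟨⟨x, y⟩, ⟨hx, hy⟩, rfl⟩
    have h1 : dist p x < r := Metric.mem_ball'.mp hx
    have h2 : dist y q < r := Metric.mem_ball.mp hy
    have h3 : d ≤ dist p x + dist x y + dist y q := dist_triangle4 p x y q
    simp only at h3 ⊢
    linarith
  -- exponent comparison
  have hexp : Real.exp (-sd ^ 2 / (8 * τ)) ≤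
      Real.exp (1 / 2) * Real.exp (-d ^ 2 / (16 * τ)) := by
    rw [← Real.exp_add]
    apply Real.exp_le_exp.mpr
    rcases le_or_gt d (2 * r) with hcase | hcase
    · have hsq : 0 ≤ sd ^ 2 := sq_nonneg sd
      have hd0 : 0 ≤ d := dist_nonneg
      have : d ^ 2 ≤ 4 * τ := by nlinarith
      have h8 : 0 < 8 * τ := by linarith
      have h16 : 0 < 16 * τ := by linarith
      have hl : -sd ^ 2 / (8 * τ) ≤ 0 :=
        div_nonpos_of_nonpos_of_nonneg (by linarith) h8.le
      have h24 : -(1 / 4 : ℝ) ≤ -d ^ 2 / (16 * τ) :=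
        (le_div_iff₀ h16).mpr (by nlinarith)
      linarith
    · have hs : d - 2 * r ≤ sd := hsdlb
      have hpos : 0 < d - 2 * r := by linarith
      have hsq : (d - 2 * r) ^ 2 ≤ sd ^ 2 := by nlinarith
      rw [div_add_div _ _ (by norm_num : (2:ℝ) ≠ 0) (by positivity : (16:ℝ) * τ ≠ 0)]
      rw [div_le_div_iff₀ (by positivity) (by positivity)]
      nlinarith [sq_nonneg (d - 4 * r)]
  -- concentration applied to the two balls
  have hkey : c * I ≤ Real.exp (-sd ^ 2 / (8 * τ)) := by
    calc c * I ≤ (∫ x in A, u x ∂μ) * I :=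
          mul_le_mul_of_nonneg_right hlb hI0
      _ ≤ Real.exp (-sd ^ 2 / (8 * τ)) :=
          hconc A B measurableSet_ball measurableSet_ball
  have hIle : I ≤ Real.exp (1 / 2) * Real.exp (-d ^ 2 / (16 * τ)) / c := by
    rw [le_div_iff₀ hc, mul_comm]
    exact hkey.trans hexp
  set T : ℝ := τ ^ ((n : ℝ) / 2) with hT_def
  have hT : 0 < T := Real.rpow_pos_of_pos hτ _
  have hκT : 0 < κ * T := mul_pos hκ hT
  have hMlb : κ * T ≤ (μ B).toReal := hncl q
  have h2 : 1 / (μ B).toReal ≤ 1 / (κ * T) :=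
    one_div_le_one_div_of_le hκT hMlb
  have hrpow : τ ^ (-(n : ℝ) / 2) = T⁻¹ := by
    rw [hT_def, ← Real.rpow_neg hτ.le, neg_div]
  rw [hrpow]
  calc (1 / (μ B).toReal) * I ≤ (1 / (κ * T)) * I :=
        mul_le_mul_of_nonneg_right h2 hI0
    _ ≤ (1 / (κ * T)) * (Real.exp (1 / 2) * Real.exp (-d ^ 2 / (16 * τ)) / c) :=
        mul_le_mul_of_nonneg_left hIle (by positivity)
    _ = (Real.exp (1 / 2) / (c * κ)) * T⁻¹ * Real.exp (-d ^ 2 / (16 * τ)) := by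
        field_simp
end

section
/- Let n ≥ 1 and let f : ℝⁿ → ℝ be a C² function such that for some constants c ≥ 0 and C > 0: f(x) ≥ ¼(|x| − c)² for all x with |x| ≥ c, |∇f(x)| ≤ C(1 + |x|) for all x, and |Δf(x)| ≤ C(1 + |x|²) for all x. Then the functions Δf·e^{−f} and |∇f|²·e^{−f} are integrable on ℝⁿ and ∫_{ℝⁿ} Δf(x) e^{−f(x)} dx = ∫_{ℝⁿ} |∇f(x)|² e^{−f(x)} dx. -/
/-!
Since `div (e^{-f} ∇f) = (Δf - |∇f|²) e^{-f}`, the identity says that the integral of a divergence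
vanishes. This holds for every `C¹` vector field whose components and divergence are integrable:
integrate by parts against the dilates `φ (x / R)` of a compactly supported bump with `φ 0 = 1`;
the error term carries the factor `1 / R` from the chain rule, and dominated convergence
lets `R → ∞`. The quadratic growth of `f` makes `e^{-f}` decay like a Gaussian, which absorbs the
polynomial bounds on `∇f` and `Δf` and yields all the integrability needed.
-/

open MeasureTheory

/-- The Laplacian of a function on Euclidean space, as the trace of its second derivative. -/
noncomputable def euclideanLaplacian {n : ℕ} (f : EuclideanSpace ℝ (Fin n) → ℝ)
    (x : EuclideanSpace ℝ (Fin n)) : ℝ :=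
  ∑ i : Fin n, iteratedFDeriv ℝ 2 f x ![EuclideanSpace.single i 1, EuclideanSpace.single i 1]

open Filter Topology

section Dilation

variable {E : Type*} [NormedAddCommGroup E] [NormedSpace ℝ E]

noncomputable def dilate (φ : E → ℝ) (R : ℝ) (x : E) : ℝ := φ (R⁻¹ • x)

lemma hasFDerivAt_dilate {φ : E → ℝ} {R : ℝ} {x : E} (hφ : DifferentiableAt ℝ φ (R⁻¹ • x)) :
    HasFDerivAt (dilate φ R) (R⁻¹ • fderiv ℝ φ (R⁻¹ • x)) x := by
  unfold dilate
  have := hφ.hasFDerivAt.comp x ((hasFDerivAt_id x).const_smul R⁻¹)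
  simpa [Function.comp_def] using this

lemma ContDiff.dilate {φ : E → ℝ} {n : WithTop ℕ∞} (hφ : ContDiff ℝ n φ) (R : ℝ) :
    ContDiff ℝ n (dilate φ R) :=
  hφ.comp (contDiff_const_smul R⁻¹)

lemma HasCompactSupport.dilate {φ : E → ℝ} (hφ : HasCompactSupport φ) {R : ℝ} (hR : R ≠ 0) :
    HasCompactSupport (dilate φ R) :=
  hφ.comp_homeomorph (Homeomorph.smulOfNeZero R⁻¹ (inv_ne_zero hR))

lemma tendsto_dilate_atTop {φ : E → ℝ} (hφ : ContinuousAt φ 0) (x : E) :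
    Tendsto (fun R => dilate φ R x) atTop (𝓝 (φ 0)) := by
  have : Tendsto (fun R : ℝ => R⁻¹ • x) atTop (𝓝 0) := by
    simpa using (tendsto_inv_atTop_zero (𝕜 := ℝ)).smul_const x
  exact hφ.tendsto.comp this

lemma norm_fderiv_dilate_le {φ : E → ℝ} (hφ : Differentiable ℝ φ) {K : ℝ}
    (hK : ∀ y, ‖fderiv ℝ φ y‖ ≤ K) (R : ℝ) (x : E) :
    ‖fderiv ℝ (dilate φ R) x‖ ≤ |R|⁻¹ * K := by
  rw [(hasFDerivAt_dilate (hφ _)).fderiv, norm_smul, norm_inv, Real.norm_eq_abs]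
  gcongr
  exact hK _

end Dilation

section DominatedConvergence

variable {E : Type*} [NormedAddCommGroup E] [NormedSpace ℝ E] [MeasurableSpace E] [BorelSpace E]
  {μ : Measure E}

lemma tendsto_integral_dilate_mul {φ g : E → ℝ} (hφ : Continuous φ) {M : ℝ}
    (hM : ∀ y, |φ y| ≤ M) (hg : Integrable g μ) :
    Tendsto (fun R => ∫ x, dilate φ R x * g x ∂μ) atTop (𝓝 (φ 0 * ∫ x, g x ∂μ)) := by
  rw [← integral_const_mul]
  refine tendsto_integral_filter_of_dominated_convergence (fun x => M * |g x|)
    (Eventually.of_forall fun R => ((hφ.comp (continuous_const_smul R⁻¹)).aestronglyMeasurable.mul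
      hg.1)) (Eventually.of_forall fun R => ae_of_all _ fun x => ?_) (hg.abs.const_mul M)
    (ae_of_all _ fun x => (tendsto_dilate_atTop hφ.continuousAt x).mul_const (g x))
  rw [norm_mul, Real.norm_eq_abs, Real.norm_eq_abs]
  exact mul_le_mul_of_nonneg_right (hM _) (abs_nonneg _)

lemma tendsto_integral_fderiv_dilate_mul {φ g : E → ℝ} (hφ : Differentiable ℝ φ) {K : ℝ}
    (hK : ∀ y, ‖fderiv ℝ φ y‖ ≤ K) (hg : Integrable g μ) (v : E) :
    Tendsto (fun R => ∫ x, fderiv ℝ (dilate φ R) x v * g x ∂μ) atTop (𝓝 0) := by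
  have hbound : ∀ R x, ‖fderiv ℝ (dilate φ R) x v * g x‖ ≤ |R|⁻¹ * (K * ‖v‖ * |g x|) := by
    intro R x
    calc ‖fderiv ℝ (dilate φ R) x v * g x‖
        ≤ ‖fderiv ℝ (dilate φ R) x‖ * ‖v‖ * |g x| := by
          rw [norm_mul, Real.norm_eq_abs (g x)]
          exact mul_le_mul_of_nonneg_right (ContinuousLinearMap.le_opNorm _ _) (abs_nonneg _)
      _ ≤ |R|⁻¹ * K * ‖v‖ * |g x| := by
          gcongr ?_ * _ * _
          exact norm_fderiv_dilate_le hφ hK R x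
      _ = |R|⁻¹ * (K * ‖v‖ * |g x|) := by ring
  have hdecay : Tendsto (fun R : ℝ => |R|⁻¹) atTop (𝓝 0) :=
    tendsto_inv_atTop_zero.comp tendsto_abs_atTop_atTop
  rw [← integral_zero E ℝ]
  refine tendsto_integral_filter_of_dominated_convergence (fun x => K * ‖v‖ * |g x|)
    (Eventually.of_forall fun R =>
      (measurable_fderiv_apply_const ℝ _ v).aestronglyMeasurable.mul hg.1)
    ?_ ((hg.abs.const_mul (K * ‖v‖)).congr (ae_of_all _ fun x => by simp [mul_assoc]))
    (ae_of_all _ fun x => squeeze_zero_norm (hbound · x) (by simpa using hdecay.mul_const _))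
  filter_upwards [eventually_ge_atTop 1] with R hR
  have hK0 : 0 ≤ K := (norm_nonneg _).trans (hK 0)
  refine ae_of_all _ fun x => (hbound R x).trans (mul_le_of_le_one_left (by positivity) ?_)
  exact inv_le_one_of_one_le₀ (hR.trans (le_abs_self R))

end DominatedConvergence

section IntegrationByParts

variable {E : Type*} [NormedAddCommGroup E] [NormedSpace ℝ E] [FiniteDimensional ℝ E]
  [MeasurableSpace E] [BorelSpace E] {μ : Measure E} [μ.IsAddHaarMeasure]

lemma integral_mul_fderiv_eq_neg_fderiv_mul_of_hasCompactSupport {χ F : E → ℝ}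
    (hχ : ContDiff ℝ 1 χ) (hχc : HasCompactSupport χ) (hF : ContDiff ℝ 1 F) (v : E) :
    ∫ x, χ x * fderiv ℝ F x v ∂μ = -∫ x, fderiv ℝ χ x v * F x ∂μ := by
  have hχ' : Continuous fun x => fderiv ℝ χ x v :=
    (hχ.continuous_fderiv one_ne_zero).clm_apply continuous_const
  have hF' : Continuous fun x => fderiv ℝ F x v :=
    (hF.continuous_fderiv one_ne_zero).clm_apply continuous_const
  exact integral_mul_fderiv_eq_neg_fderiv_mul_of_integrable
    ((hχ'.mul hF.continuous).integrable_of_hasCompactSupport (hχc.fderiv_apply ℝ v).mul_right)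
    ((hχ.continuous.mul hF').integrable_of_hasCompactSupport hχc.mul_right)
    ((hχ.continuous.mul hF.continuous).integrable_of_hasCompactSupport hχc.mul_right)
    (fun x _ => hχ.differentiable one_ne_zero x) (fun x _ => hF.differentiable one_ne_zero x)

theorem integral_sum_fderiv_eq_zero_of_integrable {ι : Type*} [Fintype ι] {F : ι → E → ℝ}
    (hF : ∀ i, ContDiff ℝ 1 (F i)) (hFi : ∀ i, Integrable (F i) μ) (v : ι → E)
    (hdiv : Integrable (fun x => ∑ i, fderiv ℝ (F i) x (v i)) μ) :
    ∫ x, ∑ i, fderiv ℝ (F i) x (v i) ∂μ = 0 := by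
  obtain ⟨φ, -, hφc, hφ, hφ01, hφ0⟩ :=
    exists_contDiff_tsupport_subset (n := 1) (x := (0 : E)) univ_mem
  have hφ' : ContDiff ℝ 1 φ := hφ
  obtain ⟨K, hK⟩ : ∃ K, ∀ y, ‖fderiv ℝ φ y‖ ≤ K :=
    (hφ'.continuous_fderiv one_ne_zero).bounded_above_of_compact_support (hφc.fderiv (𝕜 := ℝ))
  have hcut : ∀ R ≠ 0, ∫ x, dilate φ R x * ∑ i, fderiv ℝ (F i) x (v i) ∂μ =
      -∑ i, ∫ x, fderiv ℝ (dilate φ R) x (v i) * F i x ∂μ := by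
    intro R hR
    simp only [Finset.mul_sum]
    rw [integral_finsetSum, ← Finset.sum_neg_distrib]
    · exact Finset.sum_congr rfl fun i _ =>
        integral_mul_fderiv_eq_neg_fderiv_mul_of_hasCompactSupport (hφ'.dilate R)
          (hφc.dilate hR) (hF i) (v i)
    · refine fun i _ => Continuous.integrable_of_hasCompactSupport ?_ (hφc.dilate hR).mul_right
      exact (hφ'.dilate R).continuous.mul
        (((hF i).continuous_fderiv one_ne_zero).clm_apply continuous_const)
  have h_to_div := tendsto_integral_dilate_mul hφ'.continuous (M := 1)
    (fun y => abs_le.2 ⟨by linarith [(hφ01 ⟨y, rfl⟩).1], (hφ01 ⟨y, rfl⟩).2⟩) hdiv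
  rw [hφ0, one_mul] at h_to_div
  have h_to_zero :
      Tendsto (fun R => ∫ x, dilate φ R x * ∑ i, fderiv ℝ (F i) x (v i) ∂μ) atTop (𝓝 0) := by
    refine Tendsto.congr' (eventually_gt_atTop 0 |>.mono fun R hR => (hcut R hR.ne').symm) ?_
    simpa using (tendsto_finsetSum Finset.univ fun i _ =>
      tendsto_integral_fderiv_dilate_mul (hφ'.differentiable one_ne_zero) hK (hFi i) (v i)).neg
  exact tendsto_nhds_unique h_to_div h_to_zero

end IntegrationByParts

section Growth

open Real

lemma exists_sq_norm_div_eight_sub_le {E : Type*} [NormedAddCommGroup E] [ProperSpace E]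
    {f : E → ℝ} (hf : Continuous f) {c : ℝ}
    (hgrowth : ∀ x, c ≤ ‖x‖ → 1 / 4 * (‖x‖ - c) ^ 2 ≤ f x) :
    ∃ B, ∀ x, ‖x‖ ^ 2 / 8 - B ≤ f x := by
  obtain ⟨m, hm⟩ := (isCompact_closedBall (0 : E) c).bddBelow_image hf.continuousOn
  refine ⟨c ^ 2 / 4 + |m|, fun x => ?_⟩
  rcases le_total c ‖x‖ with hx | hx
  · nlinarith [hgrowth x hx, sq_nonneg (‖x‖ - 2 * c), abs_nonneg m]
  · have : m ≤ f x := hm ⟨x, by simpa using hx, rfl⟩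
    nlinarith [norm_nonneg x, neg_abs_le m]

variable {V : Type*} [NormedAddCommGroup V] [InnerProductSpace ℝ V] [FiniteDimensional ℝ V]
  [MeasurableSpace V] [BorelSpace V]

lemma integrable_exp_neg_mul_sq_norm {b : ℝ} (hb : 0 < b) :
    Integrable fun x : V => exp (-b * ‖x‖ ^ 2) := by
  refine (GaussianFourier.integrable_cexp_neg_mul_sq_norm_add (V := V) (b := b)
    (by simpa using hb) 0 0).norm.congr (ae_of_all _ fun x => ?_)
  simp only [zero_mul, add_zero, Complex.norm_exp]
  norm_cast

lemma integrable_one_add_sq_norm_mul_exp_neg {f : V → ℝ} (hf : Continuous f) {B : ℝ}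
    (hB : ∀ x, ‖x‖ ^ 2 / 8 - B ≤ f x) :
    Integrable fun x => (1 + ‖x‖ ^ 2) * exp (-f x) := by
  refine ((integrable_exp_neg_mul_sq_norm (V := V) (b := 1 / 16) (by norm_num)).const_mul
    (16 * exp B)).mono' (by fun_prop) (ae_of_all _ fun x => ?_)
  have hpoly : 1 + ‖x‖ ^ 2 ≤ 16 * exp (‖x‖ ^ 2 / 16) := by
    linarith [add_one_le_exp (‖x‖ ^ 2 / 16)]
  rw [Real.norm_of_nonneg (by positivity)]
  calc (1 + ‖x‖ ^ 2) * exp (-f x)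
      ≤ 16 * exp (‖x‖ ^ 2 / 16) * exp (B - ‖x‖ ^ 2 / 8) := by
        gcongr
        linarith [hB x]
    _ = 16 * exp B * exp (-(1 / 16) * ‖x‖ ^ 2) := by
        rw [mul_assoc, ← exp_add, mul_assoc, ← exp_add]
        ring_nf

lemma integrable_mul_exp_neg_of_abs_le {f g : V → ℝ} (hf : Continuous f) (hg : Continuous g)
    (hw : Integrable fun x => (1 + ‖x‖ ^ 2) * exp (-f x)) {A : ℝ}
    (hgA : ∀ x, |g x| ≤ A * (1 + ‖x‖ ^ 2)) :
    Integrable fun x => g x * exp (-f x) := by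
  refine (hw.const_mul A).mono' (by fun_prop) (ae_of_all _ fun x => ?_)
  rw [norm_mul, Real.norm_eq_abs, Real.norm_of_nonneg (exp_pos _).le, ← mul_assoc]
  exact mul_le_mul_of_nonneg_right (hgA x) (exp_pos _).le

end Growth

section Calculus

open Real

lemma fderiv_mul_exp_neg_apply {E : Type*} [NormedAddCommGroup E] [NormedSpace ℝ E]
    {f g : E → ℝ} {x : E} (hf : DifferentiableAt ℝ f x) (hg : DifferentiableAt ℝ g x) (w : E) :
    fderiv ℝ (fun y => g y * exp (-f y)) x w =
      (fderiv ℝ g x w - g x * fderiv ℝ f x w) * exp (-f x) := by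
  have hfd : HasFDerivAt (fun y => -f y) (-fderiv ℝ f x) x := hf.hasFDerivAt.neg
  rw [(hg.hasFDerivAt.fun_mul hfd.exp).fderiv]
  simp only [add_apply, smul_apply, neg_apply, smul_eq_mul]
  ring

lemma continuous_gradient {E : Type*} [NormedAddCommGroup E] [InnerProductSpace ℝ E]
    [CompleteSpace E] {f : E → ℝ} (hf : ContDiff ℝ 1 f) : Continuous (gradient f) :=
  (InnerProductSpace.toDual ℝ E).symm.continuous.comp (hf.continuous_fderiv one_ne_zero)

variable {ι : Type*} [Fintype ι] [DecidableEq ι]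

lemma fderiv_apply_single (f : EuclideanSpace ℝ ι → ℝ) (x : EuclideanSpace ℝ ι) (i : ι) :
    fderiv ℝ f x (EuclideanSpace.single i 1) = gradient f x i := by
  rw [← inner_gradient_left, EuclideanSpace.inner_single_right]
  simp

lemma abs_fderiv_apply_single_le (f : EuclideanSpace ℝ ι → ℝ) (x : EuclideanSpace ℝ ι) (i : ι) :
    |fderiv ℝ f x (EuclideanSpace.single i 1)| ≤ ‖gradient f x‖ := by
  rw [fderiv_apply_single, ← Real.norm_eq_abs]
  exact PiLp.norm_apply_le _ i

lemma sum_sq_fderiv_apply_single (f : EuclideanSpace ℝ ι → ℝ) (x : EuclideanSpace ℝ ι) :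
    ∑ i, fderiv ℝ f x (EuclideanSpace.single i 1) ^ 2 = ‖gradient f x‖ ^ 2 := by
  simp [fderiv_apply_single, EuclideanSpace.norm_sq_eq]

end Calculus

section Laplacian

variable {n : ℕ} {f : EuclideanSpace ℝ (Fin n) → ℝ}

lemma continuous_euclideanLaplacian (hf : ContDiff ℝ 2 f) : Continuous (euclideanLaplacian f) :=
  continuous_finsetSum _ fun _ _ =>
    (hf.continuous_iteratedFDeriv le_rfl).eval_const _

lemma euclideanLaplacian_eq_sum_fderiv (hf : ContDiff ℝ 2 f) (x : EuclideanSpace ℝ (Fin n)) :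
    euclideanLaplacian f x = ∑ i, fderiv ℝ (fun y => fderiv ℝ f y (EuclideanSpace.single i 1)) x
      (EuclideanSpace.single i 1) := by
  have hdiff : DifferentiableAt ℝ (fderiv ℝ f) x :=
    (hf.fderiv_right (m := 1) (by norm_num)).differentiable one_ne_zero x
  refine Finset.sum_congr rfl fun i _ => ?_
  rw [iteratedFDeriv_two_apply, fderiv_clm_apply hdiff (differentiableAt_const _)]
  simp

lemma sum_fderiv_fderiv_apply_single_mul_exp_neg (hf : ContDiff ℝ 2 f)
    (x : EuclideanSpace ℝ (Fin n)) :
    ∑ i, fderiv ℝ (fun y => fderiv ℝ f y (EuclideanSpace.single i 1) * Real.exp (-f y)) x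
        (EuclideanSpace.single i 1) =
      euclideanLaplacian f x * Real.exp (-f x) - ‖gradient f x‖ ^ 2 * Real.exp (-f x) := by
  have hf' : Differentiable ℝ (fderiv ℝ f) :=
    (hf.fderiv_right (m := 1) (by norm_num)).differentiable one_ne_zero
  rw [euclideanLaplacian_eq_sum_fderiv hf, ← sum_sq_fderiv_apply_single, Finset.sum_mul,
    Finset.sum_mul, ← Finset.sum_sub_distrib]
  refine Finset.sum_congr rfl fun i _ => ?_
  rw [fderiv_mul_exp_neg_apply (hf.differentiable two_ne_zero x)
    ((hf' x).clm_apply (differentiableAt_const _))]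
  ring

end Laplacian

theorem stmt6_general (n : ℕ) (f : EuclideanSpace ℝ (Fin n) → ℝ)
    (hf : ContDiff ℝ 2 f) (c C : ℝ) (hC : 0 < C)
    (hgrowth : ∀ x : EuclideanSpace ℝ (Fin n), c ≤ ‖x‖ → (1 / 4) * (‖x‖ - c) ^ 2 ≤ f x)
    (hgrad : ∀ x : EuclideanSpace ℝ (Fin n), ‖gradient f x‖ ≤ C * (1 + ‖x‖))
    (hlap : ∀ x : EuclideanSpace ℝ (Fin n), |euclideanLaplacian f x| ≤ C * (1 + ‖x‖ ^ 2)) :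
    Integrable (fun x : EuclideanSpace ℝ (Fin n) =>
        euclideanLaplacian f x * Real.exp (-(f x))) ∧
    Integrable (fun x : EuclideanSpace ℝ (Fin n) =>
        ‖gradient f x‖ ^ 2 * Real.exp (-(f x))) ∧
    (∫ x : EuclideanSpace ℝ (Fin n), euclideanLaplacian f x * Real.exp (-(f x))) =
      ∫ x : EuclideanSpace ℝ (Fin n), ‖gradient f x‖ ^ 2 * Real.exp (-(f x)) := by
  have hf' : ContDiff ℝ 1 (fderiv ℝ f) := hf.fderiv_right le_rfl
  obtain ⟨B, hB⟩ := exists_sq_norm_div_eight_sub_le hf.continuous hgrowth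
  have hw := integrable_one_add_sq_norm_mul_exp_neg hf.continuous hB
  have hlapInt := integrable_mul_exp_neg_of_abs_le hf.continuous
    (continuous_euclideanLaplacian hf) hw hlap
  have hgradInt := integrable_mul_exp_neg_of_abs_le (g := fun x => ‖gradient f x‖ ^ 2)
    (A := 2 * C ^ 2) hf.continuous ((continuous_gradient (hf.of_le one_le_two)).norm.pow 2) hw
    fun x => by
      rw [abs_of_nonneg (by positivity)]
      nlinarith [hgrad x, norm_nonneg (gradient f x), sq_nonneg (1 - ‖x‖)]
  have hpartialInt : ∀ i, Integrable fun x =>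
      fderiv ℝ f x (EuclideanSpace.single i 1) * Real.exp (-f x) := fun i =>
    integrable_mul_exp_neg_of_abs_le (A := 2 * C) hf.continuous
      (hf'.continuous.clm_apply continuous_const) hw fun x => by
        nlinarith [abs_fderiv_apply_single_le f x i, hgrad x, sq_nonneg (1 - ‖x‖)]
  refine ⟨hlapInt, hgradInt, ?_⟩
  have hdiv := integral_sum_fderiv_eq_zero_of_integrable (μ := volume)
    (F := fun i x => fderiv ℝ f x (EuclideanSpace.single i 1) * Real.exp (-f x))
    (fun i => (hf'.clm_apply contDiff_const).mul
      ((Real.contDiff_exp.comp hf.neg).of_le one_le_two))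
    hpartialInt (fun i => EuclideanSpace.single i 1)
    (by simp only [sum_fderiv_fderiv_apply_single_mul_exp_neg hf]; exact hlapInt.sub hgradInt)
  simp only [sum_fderiv_fderiv_apply_single_mul_exp_neg hf] at hdiv
  rwa [integral_sub hlapInt hgradInt, sub_eq_zero] at hdiv

/-- Weighted integration by parts on `ℝⁿ`: if a `C²` potential `f` grows quadratically and
its gradient and Laplacian grow at most linearly resp. quadratically, then `Δf · e^{−f}` and
`|∇f|² · e^{−f}` are integrable and `∫ Δf e^{−f} = ∫ |∇f|² e^{−f}`. -/
theorem stmt6 (n : ℕ) (hn : 1 ≤ n) (f : EuclideanSpace ℝ (Fin n) → ℝ)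
    (hf : ContDiff ℝ 2 f) (c C : ℝ) (hc : 0 ≤ c) (hC : 0 < C)
    (hgrowth : ∀ x : EuclideanSpace ℝ (Fin n), c ≤ ‖x‖ → (1 / 4) * (‖x‖ - c) ^ 2 ≤ f x)
    (hgrad : ∀ x : EuclideanSpace ℝ (Fin n), ‖gradient f x‖ ≤ C * (1 + ‖x‖))
    (hlap : ∀ x : EuclideanSpace ℝ (Fin n), |euclideanLaplacian f x| ≤ C * (1 + ‖x‖ ^ 2)) :
    Integrable (fun x : EuclideanSpace ℝ (Fin n) =>
        euclideanLaplacian f x * Real.exp (-(f x))) ∧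
    Integrable (fun x : EuclideanSpace ℝ (Fin n) =>
        ‖gradient f x‖ ^ 2 * Real.exp (-(f x))) ∧
    (∫ x : EuclideanSpace ℝ (Fin n), euclideanLaplacian f x * Real.exp (-(f x))) =
      ∫ x : EuclideanSpace ℝ (Fin n), ‖gradient f x‖ ^ 2 * Real.exp (-(f x)) :=
  stmt6_general n f hf c C hC hgrowth hgrad hlap
end
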